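/- arXiv:2105.10994 — 8 statements merged into one kernel-verified Lean document; each statement's English description precedes it below -/
import Mathlib

section
/- Let q ≥ 17 be an odd prime power and let b, c ∈ F_q with bc ≠ 0. Then the point U = ⟨(0,b,c)⟩ is H-covered. -/
noncomputable section

/-- Three points of PG(2,q) are collinear if they have linearly dependent representatives. -/
def Coll3 {F : Type*} [Field F] (P Q R : Projectivization F (Fin 3 → F)) : Prop :=
  ¬ LinearIndependent F ![P.rep, Q.rep, R.rep]

/-- A point is `S`-covered if it lies on a line through two distinct points of `S`. -/
def PGCovered {F : Type*} [Field F] (S : Set (Projectivization F (Fin 3 → F)))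
    (P : Projectivization F (Fin 3 → F)) : Prop :=
  ∃ Q ∈ S, ∃ R ∈ S, Q ≠ R ∧ Coll3 P Q R

/-- A point not in `S` is `S`-free if it is not `S`-covered. -/
def PGFree {F : Type*} [Field F] (S : Set (Projectivization F (Fin 3 → F)))
    (P : Projectivization F (Fin 3 → F)) : Prop :=
  P ∉ S ∧ ¬ PGCovered S P

lemma vec_ne_zero {F : Type*} [Field F] (v : Fin 3 → F) (i : Fin 3) (h : v i ≠ 0) : v ≠ 0 :=
  fun hv => h (by simp [hv])

/-- The set `H = {⟨(1,s⁴,s²)⟩ : s ∈ F}` of points of PG(2,q). -/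
def HSet (F : Type*) [Field F] : Set (Projectivization F (Fin 3 → F)) :=
  {P | ∃ s : F, P = Projectivization.mk F ![1, s ^ 4, s ^ 2] (vec_ne_zero _ 0 (by simp))}

/-- The conic `C : XY = Z²` in PG(2,q).  (Membership does not depend on the choice of
representative since the equation is homogeneous.) -/
def conicC (F : Type*) [Field F] : Set (Projectivization F (Fin 3 → F)) :=
  {P | P.rep 0 * P.rep 1 = P.rep 2 ^ 2}

/-- An arc: a set of points no three of which are collinear. -/
def IsPGArc {F : Type*} [Field F] (S : Set (Projectivization F (Fin 3 → F))) : Prop :=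
  ∀ P ∈ S, ∀ Q ∈ S, ∀ R ∈ S, P ≠ Q → P ≠ R → Q ≠ R → ¬ Coll3 P Q R

/-- A complete arc: an arc which cannot be extended to a larger arc. -/
def IsCompletePGArc {F : Type*} [Field F] (S : Set (Projectivization F (Fin 3 → F))) : Prop :=
  IsPGArc S ∧ ∀ P ∉ S, ¬ IsPGArc (insert P S)

/-!
The points `U = ⟨(0,b,c)⟩`, `⟨(1,s⁴,s²)⟩`, `⟨(1,t⁴,t²)⟩` are collinear exactly when
`(s² - t²)(b - c(s² + t²)) = 0`, so it suffices to write `b/c = s² + t²` with `s² ≠ t²`.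
Every element of a field of odd order is a sum of two squares; a representation with
`s² = t²` is moved to another one along the rational parametrization of the circle, which
needs an `m` with `m(m⁴ - 1) ≠ 0`, i.e. more than five field elements.
-/

open Polynomial in
lemma FiniteField.exists_pow_ne_self {F : Type*} [Field F] [Fintype F] {n : ℕ} (hn : 1 < n)
    (hcard : n < Fintype.card F) : ∃ m : F, m ^ n ≠ m := by
  classical
  by_contra! hall
  have hp : (X ^ n - X : F[X]) ≠ 0 := FiniteField.X_pow_card_sub_X_ne_zero F hn
  have hroots : (Finset.univ : Finset F).card ≤ (X ^ n - X : F[X]).natDegree :=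
    card_le_degree_of_subset_roots fun z _ => by simp [mem_roots hp, hall z]
  rw [FiniteField.X_pow_card_sub_X_natDegree_eq F hn, Finset.card_univ] at hroots
  omega

open Polynomial in
lemma FiniteField.exists_sq_add_sq_eq {F : Type*} [Field F] [Fintype F]
    (hF : Fintype.card F % 2 = 1) (x : F) : ∃ a b : F, a ^ 2 + b ^ 2 = x := by
  obtain ⟨a, b, hab⟩ : ∃ a b, (X ^ 2 : F[X]).eval a + (X ^ 2 - C x).eval b = 0 :=
    FiniteField.exists_root_sum_quadratic (degree_X_pow 2)
      (degree_X_pow_sub_C (by norm_num) _) hF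
  refine ⟨a, b, ?_⟩
  simp only [eval_C, eval_X, eval_pow, eval_sub] at hab
  linear_combination hab

lemma FiniteField.exists_sq_add_sq_eq_and_sq_ne {F : Type*} [Field F] [Fintype F]
    (hF : Fintype.card F % 2 = 1) (hcard : 5 < Fintype.card F) {d : F} (hd : d ≠ 0) :
    ∃ s t : F, s ^ 2 + t ^ 2 = d ∧ s ^ 2 ≠ t ^ 2 := by
  obtain ⟨x, y, hxy⟩ := exists_sq_add_sq_eq hF d
  by_cases hsq : x ^ 2 = y ^ 2
  swap
  · exact ⟨x, y, hxy, hsq⟩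
  have hx : x ≠ 0 := by
    rintro rfl
    exact hd (by linear_combination -hxy - hsq)
  have h2 : (2 : F) ≠ 0 := Ring.two_ne_zero fun h =>
    by have := FiniteField.even_card_iff_char_two.mp h; omega
  obtain ⟨m, hm⟩ := exists_pow_ne_self (by norm_num : 1 < 5) hcard
  obtain ⟨⟨hm0, hm1⟩, hm2⟩ : (m ≠ 0 ∧ m ^ 2 - 1 ≠ 0) ∧ m ^ 2 + 1 ≠ 0 := by
    rw [← mul_ne_zero_iff, ← mul_ne_zero_iff]
    exact fun h => hm (by linear_combination h)
  -- `(m² - 2m - 1)² + (m² + 2m - 1)² = 2 (m² + 1)²` and `2x² = x² + y² = d`.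
  refine ⟨x * (m ^ 2 - 2 * m - 1) / (m ^ 2 + 1), x * (m ^ 2 + 2 * m - 1) / (m ^ 2 + 1), ?_, ?_⟩
  · field_simp
    linear_combination (m ^ 2 + 1) ^ 2 * (hxy + hsq)
  · intro heq
    field_simp at heq
    have h8 : 2 ^ 3 * m * (m ^ 2 - 1) * x ^ 2 = 0 := by linear_combination -x ^ 2 * heq
    exact mul_ne_zero (mul_ne_zero (mul_ne_zero (pow_ne_zero 3 h2) hm0) hm1) (pow_ne_zero 2 hx) h8

open Projectivization

lemma coll3_mk_iff_det_eq_zero {F : Type*} [Field F] {u v w : Fin 3 → F}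
    (hu : u ≠ 0) (hv : v ≠ 0) (hw : w ≠ 0) :
    Coll3 (mk F u hu) (mk F v hv) (mk F w hw) ↔ (Matrix.of ![u, v, w]).det = 0 := by
  obtain ⟨a, ha⟩ := exists_smul_eq_mk_rep F u hu
  obtain ⟨b, hb⟩ := exists_smul_eq_mk_rep F v hv
  obtain ⟨c, hc⟩ := exists_smul_eq_mk_rep F w hw
  have hreps : ![(mk F u hu).rep, (mk F v hv).rep, (mk F w hw).rep] = ![a, b, c] • ![u, v, w] := by
    rw [← ha, ← hb, ← hc]
    ext i : 1
    fin_cases i <;> rfl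
  have hrows : LinearIndependent F ![u, v, w] ↔ IsUnit (Matrix.of ![u, v, w]) :=
    Matrix.linearIndependent_rows_iff_isUnit
  rw [Coll3, hreps, LinearIndependent.units_smul_iff, hrows, Matrix.isUnit_iff_isUnit_det,
    isUnit_iff_ne_zero, not_not]

def hPoint {F : Type*} [Field F] (s : F) : Projectivization F (Fin 3 → F) :=
  mk F ![1, s ^ 4, s ^ 2] (vec_ne_zero _ 0 (by simp))

lemma hPoint_mem_hSet {F : Type*} [Field F] (s : F) : hPoint s ∈ HSet F := ⟨s, rfl⟩

lemma sq_eq_sq_of_hPoint_eq {F : Type*} [Field F] {s t : F} (h : hPoint s = hPoint t) :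
    s ^ 2 = t ^ 2 := by
  obtain ⟨a, ha⟩ := (mk_eq_mk_iff F _ _ _ _).mp h
  have h0 := congrFun ha 0
  have h2 := congrFun ha 2
  simp only [Units.smul_def, Pi.smul_apply, smul_eq_mul, Matrix.cons_val] at h0 h2
  linear_combination t ^ 2 * h0 - h2

lemma coll3_hPoint_of_mul_sq_add_sq_eq {F : Type*} [Field F] {b c s t : F}
    (hU : ![0, b, c] ≠ 0) (h : c * (s ^ 2 + t ^ 2) = b) :
    Coll3 (mk F ![0, b, c] hU) (hPoint s) (hPoint t) := by
  rw [hPoint, hPoint, coll3_mk_iff_det_eq_zero, Matrix.det_fin_three]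
  simp only [Matrix.of_apply, Matrix.cons_val, Matrix.cons_val_zero, Matrix.cons_val_one]
  linear_combination (t ^ 2 - s ^ 2) * h

/-- for `q ≥ 17`, the point `U = ⟨(0,b,c)⟩` with `bc ≠ 0` is `H`-covered. -/
theorem stmt3 (F : Type*) [Field F] [Fintype F] (q : ℕ) (hcard : Fintype.card F = q)
    (hodd : Odd q) (hq : 17 ≤ q) (b c : F) (hbc : b * c ≠ 0) :
    PGCovered (HSet F)
      (Projectivization.mk F ![0, b, c]
        (vec_ne_zero _ 1 (by simpa using left_ne_zero_of_mul hbc))) := by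
  have hc : c ≠ 0 := right_ne_zero_of_mul hbc
  obtain ⟨s, t, hst, hne⟩ := FiniteField.exists_sq_add_sq_eq_and_sq_ne
    (hcard ▸ Nat.odd_iff.mp hodd) (by omega) (div_ne_zero (left_ne_zero_of_mul hbc) hc)
  refine ⟨hPoint s, hPoint_mem_hSet s, hPoint t, hPoint_mem_hSet t,
    fun h => hne (sq_eq_sq_of_hPoint_eq h), coll3_hPoint_of_mul_sq_add_sq_eq _ ?_⟩
  rw [hst, mul_div_cancel₀ _ hc]
end
end

section
/- Let q ≥ 17 be an odd prime power and let a, c ∈ F_q with ac ≠ 0. Then the point V = ⟨(a,0,c)⟩ is H-covered. -/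
noncomputable section

/-!
Put `s = σ⁻¹`, `t = τ⁻¹`. The determinant of `V`, `⟨(1,s⁴,s²)⟩`, `⟨(1,t⁴,t²)⟩` is
`(s² - t²)(a s²t² - c(s² + t²))`, so it suffices to write `a/c = σ² + τ²` with `σ, τ ≠ 0` and
`σ² ≠ τ²`. With `σ² = (a/c)x`, `τ² = (a/c)(1 - x)` this asks for `x ≠ 1/2` with
`χ x = χ (1 - x) = χ (a/c)` for the quadratic character `χ`. Expanding
`∑ₓ (1 + εχ x)(1 + εχ (1 - x))` with the Jacobi sum `∑ₓ χ x χ (1 - x) = -χ (-1)` shows that there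
are at least `(q - 5)/4` such `x`.
-/

open Finset

lemma card_sub_five_le_four_mul_card_apply_eq_apply_one_sub_eq {F : Type*} [Field F]
    [Fintype F] [DecidableEq F] {χ : MulChar F ℤ} (hχ : χ ≠ 1) (hχq : χ.IsQuadratic) {ε : ℤ}
    (hε : ε = 1 ∨ ε = -1) :
    (Fintype.card F : ℤ) - 5 ≤ 4 * #{x | χ x = ε ∧ χ (1 - x) = ε} := by
  have hε2 : ε * ε = 1 := by rcases hε with rfl | rfl <;> norm_num
  have hsum_one_sub : ∑ x : F, χ (1 - x) = 0 := by
    rw [← MulChar.sum_eq_zero_of_ne_one hχ]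
    exact Fintype.sum_equiv (Equiv.subLeft 1) _ _ fun _ => rfl
  have hjacobi : ∑ x : F, χ x * χ (1 - x) = -χ (-1) := by
    simpa only [hχq.inv, jacobiSum] using jacobiSum_nontrivial_inv hχ
  have hsum : ∑ x : F, (1 + ε * χ x) * (1 + ε * χ (1 - x)) = Fintype.card F - χ (-1) := by
    have hexpand : ∀ x, (1 + ε * χ x) * (1 + ε * χ (1 - x)) =
        1 + ε * χ x + ε * χ (1 - x) + χ x * χ (1 - x) := fun x => by
      linear_combination (χ x * χ (1 - x)) * hε2
    rw [sum_congr rfl fun x _ => hexpand x, sum_add_distrib, sum_add_distrib, sum_add_distrib,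
      ← mul_sum, ← mul_sum, MulChar.sum_eq_zero_of_ne_one hχ, hsum_one_sub, hjacobi]
    simp only [sum_const, card_univ, nsmul_eq_mul, mul_one, mul_zero, add_zero, sub_eq_add_neg]
  have hle : ∀ x : F, (1 + ε * χ x) * (1 + ε * χ (1 - x)) ≤
      4 * (if χ x = ε ∧ χ (1 - x) = ε then 1 else 0) + 2 * (if x = 0 then 1 else 0) +
        2 * (if x = 1 then 1 else 0) := by
    intro x
    rcases eq_or_ne x 0 with rfl | hx0
    · rcases hε with rfl | rfl <;> simp [MulChar.map_zero]
    rcases eq_or_ne x 1 with rfl | hx1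
    · rcases hε with rfl | rfl <;> simp [MulChar.map_zero]
    have hu : χ x ≠ 0 := MulChar.apply_ne_zero_iff.mpr hx0.isUnit
    have hv : χ (1 - x) ≠ 0 := MulChar.apply_ne_zero_iff.mpr (sub_ne_zero.mpr hx1.symm).isUnit
    rcases hχq x with h1 | h1 | h1 <;> rcases hχq (1 - x) with h2 | h2 | h2 <;>
      rcases hε with rfl | rfl <;> simp_all
  have hbound := sum_le_sum fun x (_ : x ∈ univ) => hle x
  simp only [hsum, sum_add_distrib, ← mul_sum, sum_boole, filter_eq', mem_univ, if_true,
    card_singleton, Nat.cast_one] at hbound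
  have hχ_neg_one : χ (-1) ≤ 1 := by rcases hχq (-1) with h | h | h <;> rw [h] <;> norm_num
  linarith

lemma exists_sq_add_sq_eq_of_sq_ne {F : Type*} [Field F] [Fintype F] (hF : ringChar F ≠ 2)
    (hcard : 9 < Fintype.card F) {w : F} (hw : w ≠ 0) :
    ∃ σ τ : F, σ ≠ 0 ∧ τ ≠ 0 ∧ σ ^ 2 ≠ τ ^ 2 ∧ σ ^ 2 + τ ^ 2 = w := by
  classical
  have hcount := card_sub_five_le_four_mul_card_apply_eq_apply_one_sub_eq (quadraticChar_ne_one hF)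
    (quadraticChar_isQuadratic F) (quadraticChar_dichotomy hw)
  have htwo : 1 < #{x | quadraticChar F x = quadraticChar F w ∧
      quadraticChar F (1 - x) = quadraticChar F w} := by
    have : (9 : ℤ) < Fintype.card F := mod_cast hcard
    have : (1 : ℤ) < #{x | quadraticChar F x = quadraticChar F w ∧
      quadraticChar F (1 - x) = quadraticChar F w} := by linarith
    exact_mod_cast this
  obtain ⟨x, hx, hx_half⟩ := exists_mem_ne htwo (2⁻¹ : F)
  obtain ⟨hx1, hx2⟩ := (mem_filter.mp hx).2
  have hsq : ∀ y, quadraticChar F y = quadraticChar F w → ∃ σ : F, σ ≠ 0 ∧ σ ^ 2 = w * y := by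
    intro y hy
    have hy0 : y ≠ 0 := by
      rintro rfl
      exact hw (quadraticChar_eq_zero_iff.mp (by rw [← hy, MulChar.map_zero]))
    have hwy : quadraticChar F (w * y) = 1 := by rw [map_mul, hy, ← sq, quadraticChar_sq_one hw]
    obtain ⟨σ, hσ⟩ := (quadraticChar_one_iff_isSquare (mul_ne_zero hw hy0)).mp hwy
    refine ⟨σ, ?_, by rw [hσ, sq]⟩
    rintro rfl
    exact mul_ne_zero hw hy0 (by rw [hσ, mul_zero])
  obtain ⟨σ, hσ0, hσ⟩ := hsq x hx1
  obtain ⟨τ, hτ0, hτ⟩ := hsq (1 - x) hx2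
  refine ⟨σ, τ, hσ0, hτ0, fun h => hx_half ?_, by rw [hσ, hτ]; ring⟩
  rw [hσ, hτ] at h
  have h2x : 2 * x = 1 := by linear_combination mul_left_cancel₀ hw h
  exact eq_inv_of_mul_eq_one_right h2x

section
variable {F : Type*} [Field F]
open Projectivization

lemma coll3_mk_of_det_eq_zero {u v w : Fin 3 → F} (hu : u ≠ 0) (hv : v ≠ 0) (hw : w ≠ 0)
    (h : (Matrix.of ![u, v, w]).det = 0) : Coll3 (mk F u hu) (mk F v hv) (mk F w hw) := by
  have hli : ¬ LinearIndependent F ![u, v, w] := fun hli => by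
    simpa [Matrix.isUnit_iff_isUnit_det, h] using
      Matrix.linearIndependent_rows_iff_isUnit (A := Matrix.of ![u, v, w]) |>.mp hli
  have hdep : Dependent ![mk F u hu, mk F v hv, mk F w hw] := by
    convert Dependent.mk ![u, v, w] (fun i => by fin_cases i <;> assumption) hli using 1
    ext i
    fin_cases i <;> rfl
  have hrep : Projectivization.rep ∘ ![mk F u hu, mk F v hv, mk F w hw] =
      ![(mk F u hu).rep, (mk F v hv).rep, (mk F w hw).rep] := by
    ext i
    fin_cases i <;> rfl
  rwa [dependent_iff, hrep] at hdep

lemma mk_one_pow_four_sq_ne_of_sq_ne {s t : F} (hs : ![1, s ^ 4, s ^ 2] ≠ 0)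
    (ht : ![1, t ^ 4, t ^ 2] ≠ 0) (hst : s ^ 2 ≠ t ^ 2) :
    mk F ![1, s ^ 4, s ^ 2] hs ≠ mk F ![1, t ^ 4, t ^ 2] ht := by
  rw [Ne, mk_eq_mk_iff']
  rintro ⟨k, hk⟩
  have h0 := congrFun hk 0
  have h2 := congrFun hk 2
  simp only [Pi.smul_apply, smul_eq_mul, Matrix.cons_val_zero, Matrix.cons_val_two,
    Matrix.tail_cons, Matrix.head_cons, mul_one] at h0 h2
  exact hst (by rw [← h2, h0, one_mul])

lemma coll3_mk_of_mul_sq_mul_sq_eq {a c s t : F} (hV : ![a, 0, c] ≠ 0)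
    (hs : ![1, s ^ 4, s ^ 2] ≠ 0) (ht : ![1, t ^ 4, t ^ 2] ≠ 0)
    (h : a * (s ^ 2 * t ^ 2) = c * (s ^ 2 + t ^ 2)) :
    Coll3 (mk F ![a, 0, c] hV) (mk F ![1, s ^ 4, s ^ 2] hs) (mk F ![1, t ^ 4, t ^ 2] ht) := by
  refine coll3_mk_of_det_eq_zero hV hs ht ?_
  rw [Matrix.det_fin_three]
  simp only [Matrix.of_apply, Matrix.cons_val', Matrix.cons_val_zero, Matrix.cons_val_fin_one,
    Matrix.cons_val_one, Matrix.cons_val, mul_one, zero_mul, sub_zero, add_zero]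
  linear_combination (s ^ 2 - t ^ 2) * h

end

/-- for `q ≥ 17`, the point `V = ⟨(a,0,c)⟩` with `ac ≠ 0` is `H`-covered. -/
theorem stmt4 (F : Type*) [Field F] [Fintype F] (q : ℕ) (hcard : Fintype.card F = q)
    (hodd : Odd q) (hq : 17 ≤ q) (a c : F) (hac : a * c ≠ 0) :
    PGCovered (HSet F)
      (Projectivization.mk F ![a, 0, c]
        (vec_ne_zero _ 0 (by simpa using left_ne_zero_of_mul hac))) := by
  have hF : ringChar F ≠ 2 := by
    rw [Ne, FiniteField.even_card_iff_char_two, hcard, ← Nat.even_iff,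
      Nat.not_even_iff_odd]
    exact hodd
  have hc : c ≠ 0 := right_ne_zero_of_mul hac
  obtain ⟨σ, τ, hσ, hτ, hστ, hsum⟩ := exists_sq_add_sq_eq_of_sq_ne hF (by omega)
    (div_ne_zero (left_ne_zero_of_mul hac) hc)
  rw [eq_div_iff hc] at hsum
  refine ⟨_, ⟨σ⁻¹, rfl⟩, _, ⟨τ⁻¹, rfl⟩, mk_one_pow_four_sq_ne_of_sq_ne _ _ ?_,
    coll3_mk_of_mul_sq_mul_sq_eq _ _ _ ?_⟩
  · simpa [inv_pow] using hστ
  · field_simp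
    linear_combination -hsum
end
end

section
/- Let q ≥ 17 be an odd prime power and let a₀, b₀ ∈ F_q be nonzero, with a₀b₀ a nonsquare if q ≡ 1 (mod 4) and a₀b₀ a nonzero square if q ≡ 3 (mod 4). Set R₀ = ⟨(a₀,b₀,0)⟩ and K = H ∪ {R₀}. Then every point of C ∖ H is K-covered. -/
/-!
The points of `C ∖ H` are `⟨(0,1,0)⟩`, which lies on the line `z = 0` through `⟨(1,0,0)⟩ ∈ H`
and `R₀`, and the points `⟨(1,t²,t)⟩` with `t` a nonsquare. The determinant of `⟨(1,t²,t)⟩`,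
`⟨(1,s⁴,s²)⟩` and `R₀` is `(t - s²)(b₀ + a₀ t s²)`, so it suffices that `-b₀ / (a₀ t)` be a
square. The hypotheses on `a₀ b₀`, together with `-1` being a square exactly when `q ≡ 1 (mod 4)`,
say that `-a₀ b₀` is a nonsquare; hence `-a₀ b₀ t`, a product of two nonsquares, is a square.
-/

noncomputable section

open Projectivization

section Collinearity

variable {F : Type*} [Field F]

theorem coll3_mk_iff_det {u v w : Fin 3 → F} (hu : u ≠ 0) (hv : v ≠ 0) (hw : w ≠ 0) :
    Coll3 (mk F u hu) (mk F v hv) (mk F w hw) ↔ (Matrix.of ![u, v, w]).det = 0 := by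
  obtain ⟨a, ha⟩ := exists_smul_eq_mk_rep F u hu
  obtain ⟨b, hb⟩ := exists_smul_eq_mk_rep F v hv
  obtain ⟨c, hc⟩ := exists_smul_eq_mk_rep F w hw
  have hreps :
      ![(mk F u hu).rep, (mk F v hv).rep, (mk F w hw).rep] = ![a, b, c] • ![u, v, w] := by
    rw [← ha, ← hb, ← hc]
    ext i : 1
    fin_cases i <;> rfl
  rw [Coll3, hreps, LinearIndependent.units_smul_iff]
  change ¬LinearIndependent F (Matrix.of ![u, v, w]).row ↔ _
  rw [Matrix.linearIndependent_rows_iff_isUnit, Matrix.isUnit_iff_isUnit_det, isUnit_iff_ne_zero,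
    not_not]

theorem mk_ne_mk_of_apply_ne_zero_of_apply_eq_zero {u v : Fin 3 → F} (hu : u ≠ 0) (hv : v ≠ 0)
    {i : Fin 3} (hui : u i ≠ 0) (hvi : v i = 0) : mk F u hu ≠ mk F v hv := by
  rw [Ne, mk_eq_mk_iff]
  rintro ⟨a, hav⟩
  exact hui (by simpa [hvi] using (congrFun hav i).symm)

end Collinearity

section Conic

variable {F : Type*} [Field F]

theorem eq_mk_of_mem_conicC {P : Projectivization F (Fin 3 → F)} (hP : P ∈ conicC F) :
    P = mk F ![0, 1, 0] (vec_ne_zero _ 1 one_ne_zero) ∨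
      ∃ t : F, P = mk F ![1, t ^ 2, t] (vec_ne_zero _ 0 one_ne_zero) := by
  have hP' : P.rep 0 * P.rep 1 = P.rep 2 ^ 2 := hP
  rw [← P.mk_rep]
  by_cases h0 : P.rep 0 = 0
  · have h2 : P.rep 2 = 0 := by simpa [h0] using hP'.symm
    have h1 : P.rep 1 ≠ 0 := fun h1 ↦ P.rep_nonzero (by ext i; fin_cases i <;> assumption)
    refine Or.inl ((mk_eq_mk_iff _ _ _ _ _).2 ⟨Units.mk0 (P.rep 1) h1, ?_⟩)
    ext i; fin_cases i <;> simp [h0, h2]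
  · refine Or.inr ⟨P.rep 2 / P.rep 0, (mk_eq_mk_iff _ _ _ _ _).2 ⟨Units.mk0 (P.rep 0) h0, ?_⟩⟩
    ext i; fin_cases i <;> simp [Units.smul_def] <;> field_simp
    exact hP'.symm

theorem mk_mem_HSet_of_isSquare {t : F} (ht : IsSquare t) :
    mk F ![1, t ^ 2, t] (vec_ne_zero _ 0 one_ne_zero) ∈ HSet F := by
  obtain ⟨s, rfl⟩ := ht
  exact ⟨s, by congr 1; ext i; fin_cases i <;> simp <;> ring⟩

end Conic

section Squares

variable {F : Type*} [Field F]

theorem isSquare_mul_of_not_isSquare [Fintype F] {x y : F} (hx : ¬IsSquare x)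
    (hy : ¬IsSquare y) : IsSquare (x * y) := by
  classical
  have hx0 : x ≠ 0 := by rintro rfl; exact hx IsSquare.zero
  have hy0 : y ≠ 0 := by rintro rfl; exact hy IsSquare.zero
  rw [← quadraticChar_one_iff_isSquare (mul_ne_zero hx0 hy0), map_mul,
    quadraticChar_neg_one_iff_not_isSquare.2 hx, quadraticChar_neg_one_iff_not_isSquare.2 hy]
  norm_num

theorem not_isSquare_neg_of_isSquare_neg_one {x : F} (h : IsSquare (-1 : F))
    (hx : ¬IsSquare x) : ¬IsSquare (-x) := by
  rintro ⟨r, hr⟩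
  obtain ⟨i, hi⟩ := h
  exact hx ⟨i * r, by linear_combination hi * r * r - hr⟩

theorem not_isSquare_neg_of_not_isSquare_neg_one {x : F} (h : ¬IsSquare (-1 : F)) (hx0 : x ≠ 0)
    (hx : IsSquare x) : ¬IsSquare (-x) := by
  rintro ⟨r, hr⟩
  obtain ⟨u, rfl⟩ := hx
  have hu : u ≠ 0 := by rintro rfl; simp at hx0
  exact h ⟨r / u, by field_simp; linear_combination hr⟩

theorem exists_mul_sq_eq_of_isSquare_mul {c d : F} (hc : c ≠ 0) (hcd : IsSquare (c * d)) :
    ∃ s : F, c * s ^ 2 = d := by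
  obtain ⟨r, hr⟩ := hcd
  exact ⟨r / c, by field_simp; linear_combination -hr⟩

end Squares

/-- with `R₀ = ⟨(a₀,b₀,0)⟩` as stated and `K = H ∪ {R₀}`, every point of
`C ∖ H` is `K`-covered. -/
theorem stmt5 (F : Type*) [Field F] [Fintype F] (q : ℕ) (hcard : Fintype.card F = q)
    (hodd : Odd q) (a₀ b₀ : F) (ha₀ : a₀ ≠ 0) (hb₀ : b₀ ≠ 0)
    (h1 : q % 4 = 1 → ¬ IsSquare (a₀ * b₀))
    (h3 : q % 4 = 3 → a₀ * b₀ ≠ 0 ∧ IsSquare (a₀ * b₀)) :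
    ∀ P ∈ conicC F \ HSet F,
      PGCovered (HSet F ∪
        {Projectivization.mk F ![a₀, b₀, 0] (vec_ne_zero _ 0 (by simpa using ha₀))}) P := by
  rintro P ⟨hPC, hPH⟩
  have hR₀ : ![a₀, b₀, 0] ≠ 0 := vec_ne_zero _ 0 ha₀
  rcases eq_mk_of_mem_conicC hPC with rfl | ⟨t, rfl⟩
  · refine ⟨_, Or.inl ⟨0, rfl⟩, _, Or.inr rfl,
      (mk_ne_mk_of_apply_ne_zero_of_apply_eq_zero hR₀ _ (i := 1) hb₀ (by simp)).symm, ?_⟩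
    simp [coll3_mk_iff_det, Matrix.det_fin_three]
  have ht : ¬IsSquare t := fun h ↦ hPH (mk_mem_HSet_of_isSquare h)
  have ht0 : t ≠ 0 := by rintro rfl; exact ht IsSquare.zero
  have hab : ¬IsSquare (-(a₀ * b₀)) := by
    rcases Nat.odd_mod_four_iff.1 (Nat.odd_iff.1 hodd) with hq | hq
    · exact not_isSquare_neg_of_isSquare_neg_one
        (FiniteField.isSquare_neg_one_iff.2 (by omega)) (h1 hq)
    · exact not_isSquare_neg_of_not_isSquare_neg_one
        (FiniteField.isSquare_neg_one_iff.not_left.2 (by omega)) (h3 hq).1 (h3 hq).2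
  obtain ⟨s, hs⟩ : ∃ s, a₀ * t * s ^ 2 = -b₀ :=
    exists_mul_sq_eq_of_isSquare_mul (mul_ne_zero ha₀ ht0)
      (by simpa [mul_comm, mul_left_comm] using isSquare_mul_of_not_isSquare hab ht)
  have hs0 : s ^ 2 ≠ 0 := by rintro h; simp [h, hb₀, eq_comm] at hs
  refine ⟨_, Or.inl ⟨s, rfl⟩, _, Or.inr rfl,
    mk_ne_mk_of_apply_ne_zero_of_apply_eq_zero _ hR₀ (i := 2) hs0 rfl, ?_⟩
  rw [coll3_mk_iff_det, Matrix.det_fin_three]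
  simp only [Matrix.of_apply, Matrix.cons_val', Matrix.cons_val_zero, Matrix.cons_val_fin_one,
    Matrix.cons_val_one, Matrix.cons_val]
  linear_combination (t - s ^ 2) * hs
end
end

section
/- Let q ≡ 3 (mod 4) be an odd prime power and let a₀, b₀ ∈ F_q be nonzero with b₀/a₀ = u⁴ for some nonzero u ∈ F_q. Set R₀ = ⟨(a₀,b₀,0)⟩ and K = H ∪ {R₀}. Then the point ⟨(0,0,1)⟩ is K-covered; in fact it lies on the line through the two distinct points R₀ and ⟨(1,u⁴,u²)⟩ ∈ H. -/
noncomputable section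

open Projectivization
open scoped LinearAlgebra.Projectivization

lemma coll3_iff_dependent {F : Type*} [Field F] (P Q R : ℙ F (Fin 3 → F)) :
    Coll3 P Q R ↔ Dependent ![P, Q, R] := by
  rw [Coll3, dependent_iff]
  congr!
  ext i : 1
  fin_cases i <;> rfl

lemma coll3_mk_of_not_linearIndependent {F : Type*} [Field F] {v w x : Fin 3 → F}
    (hv : v ≠ 0) (hw : w ≠ 0) (hx : x ≠ 0) (h : ¬ LinearIndependent F ![v, w, x]) :
    Coll3 (mk F v hv) (mk F w hw) (mk F x hx) := by
  rw [coll3_iff_dependent]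
  convert Dependent.mk ![v, w, x] (by simp [Fin.forall_fin_succ, hv, hw, hx]) h using 1
  ext i : 1
  fin_cases i <;> rfl

lemma not_linearIndependent_of_eq_add_smul {R M : Type*} [Ring R] [Nontrivial R]
    [AddCommGroup M] [Module R M] {v w x : M} (a b : R) (h : w = a • v + b • x) :
    ¬ LinearIndependent R ![v, w, x] := by
  rw [Fintype.not_linearIndependent_iff]
  refine ⟨![a, -1, b], ?_, 1, by simp⟩
  simp [Fin.sum_univ_three, h]

lemma mk_ne_mk_of_apply_eq_zero {F ι : Type*} [Field F] {v w : ι → F} (hv : v ≠ 0) (hw : w ≠ 0)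
    (i : ι) (hvi : v i = 0) (hwi : w i ≠ 0) : mk F v hv ≠ mk F w hw := by
  rw [Ne, mk_eq_mk_iff]
  rintro ⟨c, hc⟩
  exact hwi (by simpa [hvi, Units.smul_def, c.ne_zero] using congrFun hc i)

theorem stmt6 (F : Type*) [Field F] (a₀ b₀ : F) (ha₀ : a₀ ≠ 0)
    (u : F) (hu : u ≠ 0) (hquart : b₀ / a₀ = u ^ 4) :
    PGCovered (HSet F ∪
        {Projectivization.mk F ![a₀, b₀, 0] (vec_ne_zero _ 0 (by simpa using ha₀))})
      (Projectivization.mk F ![0, 0, 1] (vec_ne_zero _ 2 (by simp))) ∧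
    Projectivization.mk F ![a₀, b₀, 0] (vec_ne_zero _ 0 (by simpa using ha₀)) ≠
      Projectivization.mk F ![1, u ^ 4, u ^ 2] (vec_ne_zero _ 0 (by simp)) ∧
    Projectivization.mk F ![1, u ^ 4, u ^ 2] (vec_ne_zero _ 0 (by simp)) ∈ HSet F ∧
    Coll3 (Projectivization.mk F ![0, 0, 1] (vec_ne_zero _ 2 (by simp)))
      (Projectivization.mk F ![a₀, b₀, 0] (vec_ne_zero _ 0 (by simpa using ha₀)))
      (Projectivization.mk F ![1, u ^ 4, u ^ 2] (vec_ne_zero _ 0 (by simp))) := by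
  have hb : b₀ = a₀ * u ^ 4 := by rwa [div_eq_iff ha₀, mul_comm] at hquart
  have hmem : mk F ![1, u ^ 4, u ^ 2] (vec_ne_zero _ 0 (by simp)) ∈ HSet F := ⟨u, rfl⟩
  have hne := mk_ne_mk_of_apply_eq_zero (vec_ne_zero ![a₀, b₀, 0] 0 (by simpa using ha₀))
    (vec_ne_zero ![1, u ^ 4, u ^ 2] 0 (by simp)) 2 rfl (by simpa using hu)
  -- `(a₀, b₀, 0) = -a₀u² • (0, 0, 1) + a₀ • (1, u⁴, u²)` because `b₀ = a₀u⁴`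
  have hcoll := coll3_mk_of_not_linearIndependent (vec_ne_zero ![0, 0, 1] 2 (by simp))
    (vec_ne_zero ![a₀, b₀, 0] 0 (by simpa using ha₀)) (vec_ne_zero ![1, u ^ 4, u ^ 2] 0 (by simp))
    (not_linearIndependent_of_eq_add_smul (-(a₀ * u ^ 2)) a₀ (by
      ext i; fin_cases i <;> simp [hb]))
  exact ⟨⟨_, Or.inr rfl, _, Or.inl hmem, hne, hcoll⟩, hne, hmem, hcoll⟩
end
end

section
/- Let q ≡ 3 (mod 4) be an odd prime power and let a, b ∈ F_q be nonzero with ba⁻¹ a square in F_q. Then the point ⟨(a,b,0)⟩ is H-free. -/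
noncomputable section

/-! The line through two distinct points `⟨(1,s⁴,s²)⟩, ⟨(1,t⁴,t²)⟩` of `H` has `s² ≠ t²`, and it
passes through `⟨(a,b,0)⟩` exactly when the determinant `(s² - t²)(a(st)² + b)` vanishes, i.e. when
`(st)² = -b/a`. As `b/a` is a nonzero square this would make `-1` a square, which fails in `F_q`
for `q ≡ 3 (mod 4)`. -/

open Projectivization

lemma det_ab0_HSet_pair {F : Type*} [CommRing F] (a b s t : F) :
    (Matrix.of ![![a, b, 0], ![1, s ^ 4, s ^ 2], ![1, t ^ 4, t ^ 2]]).det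
      = (s ^ 2 - t ^ 2) * (a * (s * t) ^ 2 + b) := by
  simp only [Matrix.det_fin_three, Matrix.of_apply, Matrix.cons_val', Matrix.cons_val_zero,
    Matrix.cons_val_one, Matrix.cons_val, Matrix.cons_val_fin_one]
  ring

lemma mk_ab0_notMem_HSet {F : Type*} [Field F] {a b : F} (hb : b ≠ 0)
    (h : (![a, b, 0] : Fin 3 → F) ≠ 0) : mk F ![a, b, 0] h ∉ HSet F := by
  rintro ⟨s, hs⟩
  obtain ⟨c, hc⟩ := (mk_eq_mk_iff F _ _ _ _).1 hs
  have hs0 : (c : F) * s ^ 2 = 0 := by simpa [Units.smul_def] using congrFun hc 2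
  have hcb : (c : F) * s ^ 4 = b := by simpa [Units.smul_def] using congrFun hc 1
  obtain rfl : s = 0 := by simpa [c.ne_zero] using hs0
  exact hb (by simpa using hcb.symm)

lemma sq_ne_sq_of_mk_ne {F : Type*} [Field F] {s t : F}
    (h : mk F ![1, s ^ 4, s ^ 2] (vec_ne_zero _ 0 (by simp))
      ≠ mk F ![1, t ^ 4, t ^ 2] (vec_ne_zero _ 0 (by simp))) : s ^ 2 ≠ t ^ 2 := by
  intro hst
  have h4 : s ^ 4 = t ^ 4 := by
    rw [show s ^ 4 = (s ^ 2) ^ 2 by ring, hst]; ring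
  exact h (by simp only [hst, h4])

lemma mul_sq_add_ne_zero_of_isSquare {F : Type*} [Field F] (hF : ¬IsSquare (-1 : F)) {a b : F}
    (ha : a ≠ 0) (hb : b ≠ 0) (hsq : IsSquare (b * a⁻¹)) (x : F) : a * x ^ 2 + b ≠ 0 := by
  obtain ⟨r, hr⟩ := hsq
  have hr0 : r ≠ 0 := by rintro rfl; simp_all
  intro h
  have hxr : x ^ 2 = -(r * r) := by
    rw [← hr]; field_simp; linear_combination h
  exact hF ⟨x / r, by field_simp; linear_combination -hxr⟩

/-- for `q ≡ 3 (mod 4)`, if `b·a⁻¹` is a square then `⟨(a,b,0)⟩` is `H`-free. -/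
theorem stmt8 (F : Type*) [Field F] [Fintype F] (q : ℕ) (hcard : Fintype.card F = q)
    (hq3 : q % 4 = 3) (a b : F) (ha : a ≠ 0) (hb : b ≠ 0)
    (hsq : IsSquare (b * a⁻¹)) :
    PGFree (HSet F)
      (Projectivization.mk F ![a, b, 0] (vec_ne_zero _ 0 (by simpa using ha))) := by
  refine ⟨mk_ab0_notMem_HSet hb _, ?_⟩
  rintro ⟨_, ⟨s, rfl⟩, _, ⟨t, rfl⟩, hst, hcoll⟩
  rw [coll3_mk_iff_det_eq_zero, det_ab0_HSet_pair] at hcoll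
  have hneg : ¬IsSquare (-1 : F) := by
    rw [FiniteField.isSquare_neg_one_iff, hcard, hq3]; decide
  exact mul_ne_zero (sub_ne_zero.2 (sq_ne_sq_of_mk_ne hst))
    (mul_sq_add_ne_zero_of_isSquare hneg ha hb hsq _) hcoll
end
end

section
/- Let q be an odd prime power and let a, b, c ∈ F_q with abc ≠ 0 and ab ≠ c², and let μ ∈ F_q be a nonsquare. Then the affine curve defined by f(X,Y) = (cX² − b) − μY²(aX² − c) has no singular points over the algebraic closure K of F_q: there is no pair (x,y) ∈ K² with f(x,y) = 0, ∂f/∂X(x,y) = 0 and ∂f/∂Y(x,y) = 0. -/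
noncomputable section

open MvPolynomial

/-- The affine curve `f(X,Y) = (cX² − b) − μY²(aX² − c)`. -/
def affineF {K : Type*} [Field K] (a b c μ : K) : MvPolynomial (Fin 2) K :=
  (C c * X 0 ^ 2 - C b) - C μ * X 1 ^ 2 * (C a * X 0 ^ 2 - C c)

/-- for `q` odd, `abc ≠ 0`, `ab ≠ c²` and `μ` a nonsquare, the affine curve
`(cX² − b) − μY²(aX² − c) = 0` has no singular points over the algebraic closure of `F_q`. -/
theorem stmt13 (F : Type*) [Field F] [Fintype F] (hodd : Odd (Fintype.card F))
    (a b c μ : F) (habc : a * b * c ≠ 0) (hC : a * b ≠ c ^ 2) (hμ : ¬ IsSquare μ) :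
    ¬ ∃ x y : AlgebraicClosure F,
      eval ![x, y] (affineF (algebraMap F (AlgebraicClosure F) a)
        (algebraMap F (AlgebraicClosure F) b) (algebraMap F (AlgebraicClosure F) c)
        (algebraMap F (AlgebraicClosure F) μ)) = 0 ∧
      eval ![x, y] (pderiv 0 (affineF (algebraMap F (AlgebraicClosure F) a)
        (algebraMap F (AlgebraicClosure F) b) (algebraMap F (AlgebraicClosure F) c)
        (algebraMap F (AlgebraicClosure F) μ))) = 0 ∧
      eval ![x, y] (pderiv 1 (affineF (algebraMap F (AlgebraicClosure F) a)
        (algebraMap F (AlgebraicClosure F) b) (algebraMap F (AlgebraicClosure F) c)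
        (algebraMap F (AlgebraicClosure F) μ))) = 0 := by
  rintro ⟨x, y, hf, hx, hy⟩
  simp only [affineF, pow_two, map_sub, pderiv_mul, pderiv_C, pderiv_X_self,
    pderiv_X_of_ne (show (1:Fin 2) ≠ 0 by decide), pderiv_X_of_ne (show (0:Fin 2) ≠ 1 by decide),
    eval_sub, eval_mul, eval_add, eval_C, eval_X, map_add, zero_mul, mul_zero, mul_one, one_mul,
    add_zero, zero_add, zero_sub, sub_zero, map_neg, eval_neg, neg_eq_zero, Matrix.cons_val_zero,
    Matrix.cons_val_one, Matrix.head_cons] at hf hx hy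

  have hinj : Function.Injective (algebraMap F (AlgebraicClosure F)) := (algebraMap F (AlgebraicClosure F)).injective
  have ha : a ≠ 0 := fun h => habc (by simp [h])
  have hb : b ≠ 0 := fun h => habc (by simp [h])
  have hc : c ≠ 0 := fun h => habc (by simp [h])
  have hμ0 : μ ≠ 0 := fun h => hμ ⟨0, by simp [h]⟩
  have hF2 : ringChar F ≠ 2 := by
    intro h2
    have := FiniteField.even_card_of_char_two h2
    rw [Nat.odd_iff] at hodd
    omega
  have h2F : (2 : F) ≠ 0 := Ring.two_ne_zero hF2
  have h2 : (2 : AlgebraicClosure F) ≠ 0 := by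
    rw [show (2 : AlgebraicClosure F) = algebraMap F (AlgebraicClosure F) 2 from (map_ofNat _ 2).symm]
    exact fun h => h2F (hinj (by rw [h, map_zero]))
  have hμ0' : (algebraMap F (AlgebraicClosure F)) μ ≠ 0 := fun h => hμ0 (hinj (by simpa using h))
  have hc' : (algebraMap F (AlgebraicClosure F)) c ≠ 0 := fun h => hc (hinj (by simpa using h))
  -- analyze hy : μ * (y + y) * (a x² - c) = 0
  rcases mul_eq_zero.mp hy with h | hE
  · rcases mul_eq_zero.mp h with h' | h'
    · exact hμ0' h'
    · -- y = 0
      have hy0 : y = 0 := by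
        have : (2 : AlgebraicClosure F) * y = 0 := by linear_combination h'
        exact (mul_eq_zero.mp this).resolve_left h2
      subst hy0
      simp only [mul_zero, zero_mul, sub_zero] at hf hx
      have hx0 : x = 0 := by
        have : (algebraMap F (AlgebraicClosure F)) c * ((2:AlgebraicClosure F) * x) = 0 := by linear_combination hx
        rcases mul_eq_zero.mp this with h'' | h''
        · exact absurd h'' hc'
        · exact (mul_eq_zero.mp h'').resolve_left h2
      subst hx0
      have : (algebraMap F (AlgebraicClosure F)) b = 0 := by linear_combination -hf
      exact hb (hinj (by simpa using this))
  · -- a x² = c; hf gives c x² = b, so ab = c²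
    have h1 : (algebraMap F (AlgebraicClosure F)) a * (x * x) = (algebraMap F (AlgebraicClosure F)) c := by linear_combination hE
    have h2' : (algebraMap F (AlgebraicClosure F)) c * (x * x) = (algebraMap F (AlgebraicClosure F)) b := by
      linear_combination hf + (algebraMap F (AlgebraicClosure F)) μ * (y*y) * hE
    apply hC
    apply hinj
    rw [map_mul, map_pow]
    calc (algebraMap F (AlgebraicClosure F)) a * (algebraMap F (AlgebraicClosure F)) b
        = (algebraMap F (AlgebraicClosure F)) a * ((algebraMap F (AlgebraicClosure F)) c * (x*x)) := by rw [h2']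
      _ = (algebraMap F (AlgebraicClosure F)) c * ((algebraMap F (AlgebraicClosure F)) a * (x*x)) := by ring
      _ = (algebraMap F (AlgebraicClosure F)) c ^ 2 := by rw [h1]; ring
end
end

section
/- Let q be an odd prime power and let a₀, b₀ ∈ F_q be nonzero, with a₀b₀ a nonsquare if q ≡ 1 (mod 4) and a₀b₀ a nonzero square if q ≡ 3 (mod 4). Then H has exactly (q+1)/2 points and K = H ∪ {⟨(a₀,b₀,0)⟩} is an arc in PG(2,q) of size (q+3)/2. -/
noncomputable section

/-!
`a ↦ ⟨(1, a², a)⟩` is an injective parametrisation of the conic `XY = Z²` minus `⟨(0,1,0)⟩`, and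
`H` is the image of the squares, so `|H| = (q+1)/2`. Three points of the conic are never collinear
(the determinant is a Vandermonde determinant). For `⟨(a₀,b₀,0)⟩` and two points with parameters
`x ≠ y` the determinant is `(x - y)(a₀xy + b₀)`; if `x = s²`, `y = t²` its vanishing would make
`-a₀b₀ = (a₀st)²` a square. Since `-1` is a square exactly when `q ≡ 1 (mod 4)`, the hypotheses
on `a₀b₀` say precisely that `-a₀b₀` is a nonsquare.
-/

open scoped LinearAlgebra.Projectivization

section Collinearity

variable {F : Type*} [Field F]

lemma not_coll3_mk_of_det_ne_zero {u v w : Fin 3 → F} (hu : u ≠ 0) (hv : v ≠ 0) (hw : w ≠ 0)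
    (h : (Matrix.of ![u, v, w]).det ≠ 0) :
    ¬ Coll3 (Projectivization.mk F u hu) (Projectivization.mk F v hv)
      (Projectivization.mk F w hw) := by
  obtain ⟨a, ha⟩ := Projectivization.exists_smul_eq_mk_rep F u hu
  obtain ⟨b, hb⟩ := Projectivization.exists_smul_eq_mk_rep F v hv
  obtain ⟨c, hc⟩ := Projectivization.exists_smul_eq_mk_rep F w hw
  have hreps : ![(Projectivization.mk F u hu).rep, (Projectivization.mk F v hv).rep,
      (Projectivization.mk F w hw).rep] = ![a, b, c] • ![u, v, w] := by
    ext i : 1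
    fin_cases i <;> simp [← ha, ← hb, ← hc]
  rw [Coll3, not_not, hreps]
  exact (Matrix.linearIndependent_rows_of_det_ne_zero h).units_smul _

lemma coll3_comm (P Q R : ℙ F (Fin 3 → F)) : Coll3 Q P R ↔ Coll3 P Q R := by
  rw [Coll3, Coll3, ← linearIndependent_equiv (Equiv.swap 0 1)]
  congr! 2
  ext i : 1
  fin_cases i <;> rfl

lemma coll3_rotate (P Q R : ℙ F (Fin 3 → F)) : Coll3 P Q R ↔ Coll3 Q R P := by
  rw [Coll3, Coll3, ← linearIndependent_equiv (finRotate 3)]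
  congr! 2
  ext i : 1
  fin_cases i <;> rfl

end Collinearity

section Arcs

variable {F : Type*} [Field F]

lemma IsPGArc.mono {S T : Set (ℙ F (Fin 3 → F))} (hT : IsPGArc T) (hST : S ⊆ T) :
    IsPGArc S :=
  fun P hP Q hQ R hR => hT P (hST hP) Q (hST hQ) R (hST hR)

lemma isPGArc_insert {S : Set (ℙ F (Fin 3 → F))} {P : ℙ F (Fin 3 → F)} (hS : IsPGArc S)
    (hP : ∀ Q ∈ S, ∀ R ∈ S, Q ≠ R → ¬ Coll3 P Q R) : IsPGArc (insert P S) := by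
  rintro A (rfl | hA) B (rfl | hB) C (rfl | hC) hAB hAC hBC <;> try contradiction
  · exact hP B hB C hC hBC
  · rw [coll3_comm]; exact hP A hA C hC hAC
  · rw [coll3_rotate, coll3_rotate]; exact hP A hA B hB hAB
  · exact hS A hA B hB C hC hAB hAC hBC

end Arcs

section Conic

variable {F : Type*} [Field F]

def conicPoint (a : F) : ℙ F (Fin 3 → F) :=
  Projectivization.mk F ![1, a ^ 2, a] (vec_ne_zero _ 0 (by simp))

lemma conicPoint_injective : Function.Injective (conicPoint (F := F)) := by
  intro a b hab
  obtain ⟨c, hc⟩ := (Projectivization.mk_eq_mk_iff' F _ _ _ _).mp hab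
  have h0 := congrFun hc 0
  have h2 := congrFun hc 2
  simp only [Pi.smul_apply, Matrix.cons_val, smul_eq_mul, mul_one] at h0 h2
  rw [← h2, h0, one_mul]

lemma det_conicPoints (a b c : F) :
    (Matrix.of ![![1, a ^ 2, a], ![1, b ^ 2, b], ![1, c ^ 2, c]]).det
      = (a - b) * (b - c) * (a - c) := by
  simp only [Matrix.det_fin_three, Matrix.of_apply, Matrix.cons_val]
  ring

lemma isPGArc_range_conicPoint : IsPGArc (Set.range (conicPoint (F := F))) := by
  rintro _ ⟨a, rfl⟩ _ ⟨b, rfl⟩ _ ⟨c, rfl⟩ hab hac hbc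
  apply not_coll3_mk_of_det_ne_zero
  rw [det_conicPoints]
  refine mul_ne_zero (mul_ne_zero ?_ ?_) ?_ <;> rw [sub_ne_zero]
  · exact fun h => hab (congrArg conicPoint h)
  · exact fun h => hbc (congrArg conicPoint h)
  · exact fun h => hac (congrArg conicPoint h)

lemma det_mk_conicPoints (a b x y : F) :
    (Matrix.of ![![a, b, 0], ![1, x ^ 2, x], ![1, y ^ 2, y]]).det
      = (x - y) * (a * x * y + b) := by
  simp only [Matrix.det_fin_three, Matrix.of_apply, Matrix.cons_val]
  ring

lemma mk_ne_conicPoint {a b : F} (hv : ![a, b, 0] ≠ 0) (hb : b ≠ 0) (x : F) :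
    Projectivization.mk F ![a, b, 0] hv ≠ conicPoint x := by
  intro h
  obtain ⟨c, hc⟩ := (Projectivization.mk_eq_mk_iff' F _ _ _ _).mp h
  have h1 := congrFun hc 1
  have h2 := congrFun hc 2
  simp only [Pi.smul_apply, Matrix.cons_val, smul_eq_mul] at h1 h2
  exact hb (by linear_combination -h1 + x * h2)

end Conic

section Squares

open Finset

variable {F : Type*} [Field F] [Fintype F]

lemma card_filter_sq_eq_sq [DecidableEq F] (hF : ringChar F ≠ 2) {y : F} (hy : y ≠ 0) :
    #{x : F | x ^ 2 = y ^ 2} = 2 := by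
  have hfiber : ({x : F | x ^ 2 = y ^ 2} : Finset F) = {y, -y} := by
    ext x
    simp [sq_eq_sq_iff_eq_or_eq_neg]
  rw [hfiber, card_pair]
  exact fun h => hy ((Ring.eq_self_iff_eq_zero_of_char_ne_two hF).mp h.symm)

lemma two_mul_card_image_sq [DecidableEq F] (hF : ringChar F ≠ 2) :
    2 * #(univ.image fun x : F => x ^ 2) = Fintype.card F + 1 := by
  set S := univ.image fun x : F => x ^ 2
  have h0 : (0 : F) ∈ S := mem_image.mpr ⟨0, mem_univ _, zero_pow two_ne_zero⟩
  have hfib0 : #{x : F | x ^ 2 = 0} = 1 := by simp [filter_eq']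
  have hfib : ∀ a ∈ S.erase 0, #{x : F | x ^ 2 = a} = 2 := by
    intro a ha
    obtain ⟨ha0, hS⟩ := mem_erase.mp ha
    obtain ⟨y, -, rfl⟩ := mem_image.mp hS
    exact card_filter_sq_eq_sq hF fun hy => ha0 (by simp [hy])
  have hcount : Fintype.card F = 1 + 2 * (#S - 1) := by
    rw [← card_univ, card_eq_sum_card_image (fun x : F => x ^ 2) univ, ← add_sum_erase _ _ h0,
      hfib0, sum_congr rfl hfib, sum_const, card_erase_of_mem h0, smul_eq_mul, mul_comm]
  have hpos : 0 < #S := card_pos.mpr ⟨0, h0⟩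
  omega

lemma not_isSquare_neg_of_card_mod_four {c : F} (hodd : Odd (Fintype.card F))
    (h1 : Fintype.card F % 4 = 1 → ¬ IsSquare c)
    (h3 : Fintype.card F % 4 = 3 → c ≠ 0 ∧ IsSquare c) : ¬ IsSquare (-c) := by
  intro hc
  rcases Nat.odd_mod_four_iff.mp (Nat.odd_iff.mp hodd) with h | h
  · have hneg1 : IsSquare (-1 : F) := FiniteField.isSquare_neg_one_iff.mpr (by omega)
    exact h1 h (by simpa using hneg1.mul hc)
  · obtain ⟨hc0, hsq⟩ := h3 h
    have hneg1 : IsSquare (-1 : F) := by simpa [neg_div, hc0] using hc.div hsq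
    exact FiniteField.isSquare_neg_one_iff.mp hneg1 h

end Squares

section HSet

variable {F : Type*} [Field F]

lemma hSet_eq_range : HSet F = Set.range fun s : F => conicPoint (s ^ 2) := by
  ext P
  refine exists_congr fun s => ?_
  simp only [conicPoint, ← pow_mul, eq_comm (b := P)]

lemma ncard_hSet [Fintype F] (hF : ringChar F ≠ 2) :
    (HSet F).ncard = (Fintype.card F + 1) / 2 := by
  classical
  have hsquares : (Set.range fun s : F => s ^ 2) = ↑(Finset.univ.image fun s : F => s ^ 2) := by
    simp
  rw [hSet_eq_range, Set.range_comp' conicPoint, Set.ncard_image_of_injective _ conicPoint_injective,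
    hsquares, Set.ncard_coe_finset]
  have := two_mul_card_image_sq hF
  omega

lemma not_coll3_mk_conicPoint_sq {a b : F} (hv : ![a, b, 0] ≠ 0) (hab : ¬ IsSquare (-(a * b)))
    {s t : F} (hst : s ^ 2 ≠ t ^ 2) :
    ¬ Coll3 (Projectivization.mk F ![a, b, 0] hv) (conicPoint (s ^ 2)) (conicPoint (t ^ 2)) := by
  apply not_coll3_mk_of_det_ne_zero
  rw [det_mk_conicPoints]
  exact mul_ne_zero (sub_ne_zero.mpr hst) fun h => hab ⟨a * s * t, by linear_combination -a * h⟩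

end HSet

/-- `H` has exactly `(q+1)/2` points, and `K = H ∪ {⟨(a₀,b₀,0)⟩}` is an arc
of size `(q+3)/2`. -/
theorem stmt16 (F : Type*) [Field F] [Fintype F] (q : ℕ) (hcard : Fintype.card F = q)
    (hodd : Odd q) (a₀ b₀ : F) (ha₀ : a₀ ≠ 0) (hb₀ : b₀ ≠ 0)
    (h1 : q % 4 = 1 → ¬ IsSquare (a₀ * b₀))
    (h3 : q % 4 = 3 → a₀ * b₀ ≠ 0 ∧ IsSquare (a₀ * b₀)) :
    (HSet F).ncard = (q + 1) / 2 ∧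
    IsPGArc (HSet F ∪
      {Projectivization.mk F ![a₀, b₀, 0] (vec_ne_zero _ 0 (by simpa using ha₀))}) ∧
    (HSet F ∪
      {Projectivization.mk F ![a₀, b₀, 0] (vec_ne_zero _ 0 (by simpa using ha₀))}).ncard
      = (q + 3) / 2 := by
  subst hcard
  have hF : ringChar F ≠ 2 := by
    rwa [Ne, FiniteField.even_card_iff_char_two, ← Nat.even_iff, Nat.not_even_iff_odd]
  have hnsq : ¬ IsSquare (-(a₀ * b₀)) := not_isSquare_neg_of_card_mod_four hodd h1 h3
  have hnotin : Projectivization.mk F ![a₀, b₀, 0] (vec_ne_zero _ 0 (by simpa using ha₀))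
      ∉ HSet F := by
    rw [hSet_eq_range]
    rintro ⟨s, hs⟩
    exact mk_ne_conicPoint _ hb₀ _ hs.symm
  rw [Set.union_singleton]
  refine ⟨ncard_hSet hF, ?_, ?_⟩
  · rw [hSet_eq_range]
    refine isPGArc_insert (isPGArc_range_conicPoint.mono (Set.range_comp_subset_range (· ^ 2) conicPoint)) ?_
    rintro _ ⟨s, rfl⟩ _ ⟨t, rfl⟩ hne
    exact not_coll3_mk_conicPoint_sq _ hnsq fun h => hne (congrArg conicPoint h)
  · rw [Set.ncard_insert_of_notMem hnotin, ncard_hSet hF]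
    have := Nat.odd_iff.mp hodd
    omega
end
end

section
/- Let E be a field and F ∈ E[X,Y,Z] a homogeneous polynomial of degree k ≥ 2. Write f(X,Y) = F(X,Y,1) = f_m + f_{m+1} + ⋯ + f_k, where each f_d is the homogeneous component of degree d and f_m ≠ 0 (so the point P = ⟨(0,0,1)⟩ lies on the curve Z(F) with multiplicity m ≥ 1). Suppose: (i) Y divides f_m(X,Y) but Y² does not divide f_m(X,Y) (the line ℓ : Y = 0 counts once among the tangents of Z(F) at P); (ii) f(T,0) = F(T,0,1) = c·T^k for some nonzero c ∈ E (the intersection multiplicity of ℓ and Z(F) at P equals k); (iii) F has no linear factor that vanishes at (0,0,1) (Z(F) has no linear component through P). Then F is irreducible over the algebraic closure of E. -/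
/-!
Over the algebraic closure write `F = G * H`; both factors are homogeneous, say of degrees
`a + b = k`, and `f = g * h` for their dehomogenizations. Restricted to the line `Y = 0` this
reads `g(T,0) * h(T,0) = c T^k`, so `h(T,0)` is a single monomial `c' T^q` with `q ≥ b` because
`deg g(T,0) ≤ a`. The lowest form of `f` is the product of those of `g` and `h`, and since `Y`
is a simple tangent it divides at most one of them, say not the lowest form `h_o` of `h`. Then
`h_o(T,0) ≠ 0`, which forces `o = q ≥ b`; as `deg h ≤ b`, `h` is a binary form of degree `b`,
so `H` does not involve `Z`. Over an algebraically closed field a binary form of positive degree has a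
linear factor `X - rY`, a line through `P` dividing `F`; hence `b = 0` and `H` is a unit.
-/

noncomputable section

open MvPolynomial

theorem Polynomial.natDegree_le_natTrailingDegree_of_mul {R : Type*} [Semiring R]
    [NoZeroDivisors R] {p q : Polynomial R} (hpq : p * q ≠ 0)
    (h : (p * q).natDegree ≤ (p * q).natTrailingDegree) : p.natDegree ≤ p.natTrailingDegree := by
  have hp := left_ne_zero_of_mul hpq
  have hq := right_ne_zero_of_mul hpq
  rw [natDegree_mul hp hq, natTrailingDegree_mul hp hq] at h
  have := natTrailingDegree_le_natDegree q
  omega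

namespace MvPolynomial

variable {σ R : Type*}

section CommSemiring

variable [CommSemiring R]

/-- `p(t • x)` as a polynomial in `t`; its trailing coefficient is the lowest form of `p`. -/
def gradingPoly : MvPolynomial σ R →ₐ[R] Polynomial (MvPolynomial σ R) :=
  aeval fun i => Polynomial.C (X i) * Polynomial.X

lemma gradingPoly_monomial (d : σ →₀ ℕ) (c : R) :
    gradingPoly (monomial d c) = Polynomial.monomial d.degree (monomial d c) := by
  classical
  rw [gradingPoly, aeval_monomial, Finsupp.prod, Finset.prod_congr rfl (fun i _ => mul_pow _ _ _),
    Finset.prod_mul_distrib, Finset.prod_pow_eq_pow_sum]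
  simp only [← map_pow, ← map_prod, Polynomial.algebraMap_apply, Polynomial.C_mul_monomial,
    Polynomial.C_mul_X_pow_eq_monomial, monomial_eq, Finsupp.degree_apply, Finsupp.prod,
    algebraMap_eq]

lemma coeff_gradingPoly (p : MvPolynomial σ R) (n : ℕ) :
    (gradingPoly p).coeff n = homogeneousComponent n p := by
  induction p using MvPolynomial.induction_on' with
  | monomial d c =>
    rw [gradingPoly_monomial, Polynomial.coeff_monomial,
      homogeneousComponent_of_mem (isHomogeneous_monomial c rfl)]
    simp only [eq_comm]
  | add p q hp hq => simp [hp, hq]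

lemma eval_one_gradingPoly (p : MvPolynomial σ R) : (gradingPoly p).eval 1 = p := by
  have : (Polynomial.evalRingHom 1).comp (gradingPoly : MvPolynomial σ R →ₐ[R] _).toRingHom =
      RingHom.id _ := ringHom_ext (fun r => by simp [gradingPoly]) fun i => by simp [gradingPoly]
  exact DFunLike.congr_fun this p

lemma gradingPoly_injective : Function.Injective (gradingPoly : MvPolynomial σ R → _) :=
  Function.LeftInverse.injective eval_one_gradingPoly

lemma IsHomogeneous.gradingPoly_eq {p : MvPolynomial σ R} {n : ℕ} (hp : p.IsHomogeneous n) :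
    gradingPoly p = Polynomial.monomial n p := by
  ext1 j
  rw [coeff_gradingPoly, Polynomial.coeff_monomial, homogeneousComponent_of_mem hp]
  simp only [eq_comm]

lemma isHomogeneous_of_natDegree_le_natTrailingDegree {p : MvPolynomial σ R} {n : ℕ}
    (hlow : n ≤ (gradingPoly p).natTrailingDegree) (hhigh : (gradingPoly p).natDegree ≤ n) :
    p.IsHomogeneous n := by
  intro d hd
  have hcoeff : (gradingPoly p).coeff d.degree ≠ 0 := by
    rw [coeff_gradingPoly, ne_zero_iff]
    exact ⟨d, by rwa [coeff_homogeneousComponent, if_pos rfl]⟩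
  have := Polynomial.natTrailingDegree_le_of_ne_zero hcoeff
  have := Polynomial.le_natDegree_of_ne_zero hcoeff
  have h : d.degree = n := by omega
  rwa [Finsupp.degree_eq_weight_one] at h

lemma natDegree_aeval_le_totalDegree {S : Type*} [CommSemiring S] [Algebra R S]
    {v : σ → Polynomial S} (hv : ∀ i, (v i).natDegree ≤ 1) (p : MvPolynomial σ R) :
    (aeval v p).natDegree ≤ p.totalDegree := by
  rw [aeval_def, eval₂_eq]
  refine Polynomial.natDegree_sum_le_of_forall_le _ _ fun d hd => ?_
  refine (Polynomial.natDegree_C_mul_le _ _).trans ((Polynomial.natDegree_prod_le _ _).trans ?_)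
  refine (Finset.sum_le_sum fun i _ => Polynomial.natDegree_pow_le_of_le _ (hv i)).trans ?_
  simpa [Finsupp.sum] using le_totalDegree hd

lemma homogeneousComponent_map {S : Type*} [CommSemiring S] (φ : R →+* S) (n : ℕ)
    (p : MvPolynomial σ R) :
    homogeneousComponent n (map φ p) = map φ (homogeneousComponent n p) := by
  ext d
  simp only [coeff_homogeneousComponent, coeff_map]
  split_ifs <;> simp

lemma X_pow_dvd_iff_forall_le {i : σ} {n : ℕ} {p : MvPolynomial σ R} :
    X i ^ n ∣ p ↔ ∀ d ∈ p.support, n ≤ d i := by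
  classical
  rw [X_pow_eq_monomial, monomial_one_dvd_iff_modMonomial_eq_zero, MvPolynomial.ext_iff]
  refine forall_congr' fun d => ?_
  by_cases h : Finsupp.single i n ≤ d
  · simp [coeff_modMonomial_of_le _ h, Finsupp.single_le_iff.1 h]
  · simp [coeff_modMonomial_of_not_le _ h, Finsupp.single_le_iff.not.1 h]

lemma X_pow_dvd_map_iff {S : Type*} [CommSemiring S] {φ : R →+* S} (hφ : Function.Injective φ)
    {i : σ} {n : ℕ} {p : MvPolynomial σ R} : X i ^ n ∣ map φ p ↔ X i ^ n ∣ p := by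
  rw [X_pow_dvd_iff_forall_le, X_pow_dvd_iff_forall_le, support_map_of_injective p hφ]

lemma IsHomogeneous.eval_smul {p : MvPolynomial σ R} {n : ℕ} (hp : p.IsHomogeneous n)
    (t : R) (x : σ → R) : eval (t • x) p = t ^ n * eval x p := by
  simp only [eval_eq, Finset.mul_sum]
  refine Finset.sum_congr rfl fun d hd => ?_
  simp only [Pi.smul_apply, smul_eq_mul, mul_pow, Finset.prod_mul_distrib,
    Finset.prod_pow_eq_pow_sum, ← hp.degree_eq_sum_deg_support hd]
  ring

lemma coeff_aeval_X_zero (p : MvPolynomial (Fin 2) R) (j : ℕ) :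
    (aeval ![Polynomial.X, 0] p).coeff j = coeff (Finsupp.single 0 j) p := by
  classical
  induction p using MvPolynomial.induction_on' with
  | monomial d c =>
    rw [aeval_monomial, Finsupp.prod_fintype _ _ (by simp), Fin.prod_univ_two, coeff_monomial]
    have hd : d = Finsupp.single 0 j ↔ d 0 = j ∧ d 1 = 0 := by
      constructor
      · rintro rfl
        simp
      · rintro ⟨h0, h1⟩
        ext i
        fin_cases i <;> simp [h0, h1]
    by_cases h1 : d 1 = 0
    · simp [h1, hd, Polynomial.coeff_X_pow, eq_comm]
    · simp [h1, hd, zero_pow h1]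
  | add p q hp hq => simp [hp, hq]

lemma IsHomogeneous.coeff_single_zero_ne_zero {q : MvPolynomial (Fin 2) R} {n : ℕ}
    (hq : q.IsHomogeneous n) (h : ¬ X 1 ∣ q) : coeff (Finsupp.single 0 n) q ≠ 0 := by
  rw [← pow_one (X 1), X_pow_dvd_iff_forall_le] at h
  push Not at h
  obtain ⟨d, hd, hd1⟩ := h
  have hdeg := hq.degree_eq_sum_deg_support hd
  rw [Finset.sum_subset (Finset.subset_univ _) (fun i _ hi => Finsupp.notMem_support_iff.1 hi),
    Fin.sum_univ_two] at hdeg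
  convert mem_support_iff.1 hd
  ext i
  fin_cases i <;> simp <;> omega

end CommSemiring

theorem IsHomogeneous.of_mul_left [CommRing R] [IsDomain R] {p q : MvPolynomial σ R} {n : ℕ}
    (h : (p * q).IsHomogeneous n) (hpq : p * q ≠ 0) : p.IsHomogeneous p.totalDegree := by
  classical
  have hψ : (gradingPoly (p * q)).natDegree ≤ (gradingPoly (p * q)).natTrailingDegree := by
    rw [h.gradingPoly_eq, Polynomial.natDegree_monomial, Polynomial.natTrailingDegree_monomial hpq,
      if_neg hpq]
  rw [map_mul] at hψ
  have hp : p.IsHomogeneous (gradingPoly p).natDegree :=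
    isHomogeneous_of_natDegree_le_natTrailingDegree
      (Polynomial.natDegree_le_natTrailingDegree_of_mul
        (by rwa [← map_mul, map_ne_zero_iff _ gradingPoly_injective]) hψ) le_rfl
  rwa [hp.totalDegree (left_ne_zero_of_mul hpq)]

theorem exists_X_sub_C_mul_X_dvd_of_isHomogeneous {K : Type*} [Field K] [IsAlgClosed K]
    {h : MvPolynomial (Fin 2) K} {n : ℕ} (hh : h.IsHomogeneous n) (hn : n ≠ 0)
    (hc : coeff (Finsupp.single 0 n) h ≠ 0) : ∃ r, X 0 - C r * X 1 ∣ h := by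
  set p : Polynomial K := aeval ![Polynomial.X, 1] h
  have hp : p.homogenize n = h := Polynomial.homogenize_eq_of_isHomogeneous hh rfl
  have hpn : p.coeff n ≠ 0 := by
    rwa [← hp, Polynomial.coeff_homogenize, if_pos (by simp), Finsupp.single_eq_same] at hc
  have hdeg : p.natDegree = n := by
    refine le_antisymm ((natDegree_aeval_le_totalDegree (fun i => ?_) h).trans hh.totalDegree_le)
      (Polynomial.le_natDegree_of_ne_zero hpn)
    fin_cases i <;> simp
  obtain ⟨r, hr⟩ := IsAlgClosed.exists_root p fun h0 =>
    hn (hdeg ▸ Polynomial.natDegree_eq_zero_iff_degree_le_zero.2 h0.le)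
  refine ⟨r, ?_⟩
  have := Polynomial.homogenize_dvd (Polynomial.dvd_iff_isRoot.2 hr)
  simpa [hdeg, hp, Polynomial.homogenize_sub, Polynomial.homogenize_X] using this

end MvPolynomial

namespace PlaneCurve

section CommSemiring

variable (R : Type*) [CommSemiring R]

def dehomogenize : MvPolynomial (Fin 3) R →ₐ[R] MvPolynomial (Fin 2) R :=
  aeval ![X 0, X 1, 1]

variable {R}

lemma eval_dehomogenize (x : Fin 2 → R) (G : MvPolynomial (Fin 3) R) :
    eval x (dehomogenize R G) = eval ![x 0, x 1, 1] G := by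
  change (aeval x).comp (aeval ![X 0, X 1, 1]) G = aeval ![x 0, x 1, 1] G
  rw [comp_aeval]
  congr 2
  funext i
  fin_cases i <;> simp

lemma dehomogenize_map {S : Type*} [CommSemiring S] (φ : R →+* S) (G : MvPolynomial (Fin 3) R) :
    dehomogenize S (map φ G) = map φ (dehomogenize R G) := by
  have : (dehomogenize S).toRingHom.comp (map φ) = (map φ).comp (dehomogenize R).toRingHom :=
    ringHom_ext (fun r => by simp [dehomogenize]) fun i => by fin_cases i <;> simp [dehomogenize]
  exact DFunLike.congr_fun this G

lemma natDegree_dehomogenize_le {S : Type*} [CommSemiring S] [Algebra R S]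
    (φ : MvPolynomial (Fin 2) R →ₐ[R] Polynomial S) (h0 : (φ (X 0)).natDegree ≤ 1)
    (h1 : (φ (X 1)).natDegree ≤ 1) (G : MvPolynomial (Fin 3) R) :
    (φ (dehomogenize R G)).natDegree ≤ G.totalDegree := by
  rw [← AlgHom.comp_apply, dehomogenize, comp_aeval]
  refine natDegree_aeval_le_totalDegree (fun i => ?_) G
  fin_cases i <;> simp [h0, h1]

lemma aeval_X_zero_map {S : Type*} [CommSemiring S] (φ : R →+* S) (p : MvPolynomial (Fin 2) R) :
    aeval ![Polynomial.X, 0] (map φ p) = Polynomial.map φ (aeval ![Polynomial.X, 0] p) := by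
  have : (aeval ![Polynomial.X, 0]).toRingHom.comp (map φ) =
      (Polynomial.mapRingHom φ).comp (aeval ![Polynomial.X, 0]).toRingHom :=
    ringHom_ext (fun r => by simp) fun i => by fin_cases i <;> simp
  exact DFunLike.congr_fun this p

end CommSemiring

section Domain

variable {R : Type*} [CommRing R] [IsDomain R] {G H : MvPolynomial (Fin 3) R} {k : ℕ} {c : R}

theorem totalDegree_le_of_coeff_single_zero_ne_zero (hGH : (G * H).IsHomogeneous k)
    (hGH0 : G * H ≠ 0) (hc : c ≠ 0)
    (hline : aeval ![Polynomial.X, 0] (dehomogenize R (G * H)) = Polynomial.C c * Polynomial.X ^ k)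
    {j : ℕ} (hj : coeff (Finsupp.single 0 j) (dehomogenize R H) ≠ 0) :
    H.totalDegree ≤ j := by
  classical
  have hG := hGH.of_mul_left hGH0
  have hH := (mul_comm G H ▸ hGH).of_mul_left (mul_comm G H ▸ hGH0)
  have hk : G.totalDegree + H.totalDegree = k := (hG.mul hH).inj_right hGH hGH0
  rw [map_mul, map_mul] at hline
  set πg : Polynomial R := aeval ![Polynomial.X, 0] (dehomogenize R G)
  set πh : Polynomial R := aeval ![Polynomial.X, 0] (dehomogenize R H)
  have hline0 : πg * πh ≠ 0 := by
    rw [hline, Polynomial.C_mul_X_pow_eq_monomial]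
    exact (Polynomial.monomial_eq_zero_iff _ _).not.2 hc
  -- `g(T,0) * h(T,0) = c T^k` forces `h(T,0)` to be a monomial.
  have hmono := Polynomial.natDegree_le_natTrailingDegree_of_mul (mul_comm πg πh ▸ hline0) (by
    rw [mul_comm, hline, Polynomial.C_mul_X_pow_eq_monomial, Polynomial.natDegree_monomial,
      Polynomial.natTrailingDegree_monomial hc, if_neg hc])
  have hdeg : πg.natDegree + πh.natDegree = k := by
    rw [← Polynomial.natDegree_mul (left_ne_zero_of_mul hline0) (right_ne_zero_of_mul hline0),
      hline, Polynomial.natDegree_C_mul_X_pow k c hc]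
  have hg : πg.natDegree ≤ G.totalDegree :=
    natDegree_dehomogenize_le (aeval ![Polynomial.X, 0]) (by simp) (by simp) G
  have hj' : πh.natTrailingDegree ≤ j :=
    Polynomial.natTrailingDegree_le_of_ne_zero (by rwa [coeff_aeval_X_zero])
  omega

theorem isHomogeneous_dehomogenize_of_not_X_dvd_trailingCoeff (hGH : (G * H).IsHomogeneous k)
    (hGH0 : G * H ≠ 0) (hc : c ≠ 0)
    (hline : aeval ![Polynomial.X, 0] (dehomogenize R (G * H)) = Polynomial.C c * Polynomial.X ^ k)
    (htan : ¬ X 1 ∣ (gradingPoly (dehomogenize R H)).trailingCoeff) :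
    (dehomogenize R H).IsHomogeneous H.totalDegree ∧
      coeff (Finsupp.single 0 H.totalDegree) (dehomogenize R H) ≠ 0 := by
  set h := dehomogenize R H
  set o := (gradingPoly h).natTrailingDegree
  have hlowest : coeff (Finsupp.single 0 o) h ≠ 0 := by
    rw [Polynomial.trailingCoeff, coeff_gradingPoly] at htan
    have := (homogeneousComponent_isHomogeneous o h).coeff_single_zero_ne_zero htan
    rwa [coeff_homogeneousComponent, if_pos (Finsupp.degree_single _ _)] at this
  have hle : H.totalDegree ≤ o :=
    totalDegree_le_of_coeff_single_zero_ne_zero hGH hGH0 hc hline hlowest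
  have hh : (gradingPoly h).natDegree ≤ H.totalDegree :=
    natDegree_dehomogenize_le gradingPoly (by simp [gradingPoly]) (by simp [gradingPoly]) H
  have := (gradingPoly h).natTrailingDegree_le_natDegree
  have ho : o = H.totalDegree := by omega
  exact ⟨isHomogeneous_of_natDegree_le_natTrailingDegree (by omega) (by omega), ho ▸ hlowest⟩

end Domain

variable {K : Type*} [Field K]

theorem eq_rename_dehomogenize [Infinite K] {G : MvPolynomial (Fin 3) K} {n : ℕ}
    (hG : G.IsHomogeneous n) (hg : (dehomogenize K G).IsHomogeneous n) :
    G = rename Fin.castSucc (dehomogenize K G) := by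
  -- After multiplying by `Z` both sides vanish on `Z = 0`; elsewhere they agree by homogeneity.
  refine mul_left_cancel₀ (X_ne_zero 2) (((isHomogeneous_X K 2).mul hG).funext
    ((isHomogeneous_X K 2).mul hg.rename_isHomogeneous) fun v => ?_)
  simp only [map_mul, eval_X, eval_rename]
  rcases eq_or_ne (v 2) 0 with h2 | h2
  · simp [h2]
  congr 1
  set w : Fin 2 → K := ![v 0 / v 2, v 1 / v 2]
  have hv : v = v 2 • ![w 0, w 1, 1] := by
    ext i
    fin_cases i <;> simp [w] <;> field_simp
  have hw : v ∘ Fin.castSucc = v 2 • w := by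
    ext i
    fin_cases i <;> simp [w] <;> field_simp
  rw [hw, hg.eval_smul, eval_dehomogenize, ← hG.eval_smul, ← hv]

section IsAlgClosed

variable [IsAlgClosed K] {G H F : MvPolynomial (Fin 3) K} {k : ℕ} {c : K}

theorem isUnit_of_not_X_dvd_trailingCoeff (hGH : (G * H).IsHomogeneous k) (hGH0 : G * H ≠ 0)
    (hc : c ≠ 0)
    (hline : aeval ![Polynomial.X, 0] (dehomogenize K (G * H)) = Polynomial.C c * Polynomial.X ^ k)
    (hcone : ∀ r : K, ¬ X 0 - C r * X 1 ∣ G * H)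
    (htan : ¬ X 1 ∣ (gradingPoly (dehomogenize K H)).trailingCoeff) : IsUnit H := by
  obtain ⟨hh, hcoeff⟩ :=
    isHomogeneous_dehomogenize_of_not_X_dvd_trailingCoeff hGH hGH0 hc hline htan
  have hH0 := right_ne_zero_of_mul hGH0
  have hH := (mul_comm G H ▸ hGH).of_mul_left (mul_comm G H ▸ hGH0)
  rcases eq_or_ne H.totalDegree 0 with hb | hb
  · refine isUnit_iff_totalDegree_of_isReduced.2 ⟨isUnit_iff_ne_zero.2 fun h0 => hH0 ?_, hb⟩
    rw [totalDegree_eq_zero_iff_eq_C.1 hb, h0, map_zero]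
  · obtain ⟨r, hr⟩ := exists_X_sub_C_mul_X_dvd_of_isHomogeneous hh hb hcoeff
    refine absurd (dvd_mul_of_dvd_right ?_ G) (hcone r)
    rw [eq_rename_dehomogenize hH hh]
    simpa using map_dvd (rename Fin.castSucc) hr

theorem irreducible_of_simple_tangent {m : ℕ} (hk : k ≠ 0) (hF : F.IsHomogeneous k)
    (hlow : ∀ j < m, homogeneousComponent j (dehomogenize K F) = 0)
    (hmne : homogeneousComponent m (dehomogenize K F) ≠ 0)
    (htan : ¬ X 1 ^ 2 ∣ homogeneousComponent m (dehomogenize K F)) (hc : c ≠ 0)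
    (hline : aeval ![Polynomial.X, 0] (dehomogenize K F) = Polynomial.C c * Polynomial.X ^ k)
    (hcone : ∀ r : K, ¬ X 0 - C r * X 1 ∣ F) : Irreducible F := by
  have hF0 : F ≠ 0 := by
    rintro rfl
    simp at hmne
  refine ⟨fun hu => hk ?_, fun G H hGH => ?_⟩
  · rw [← hF.totalDegree hF0]
    exact (isUnit_iff_totalDegree_of_isReduced.1 hu).2
  subst hGH
  have hψ : (gradingPoly (dehomogenize K (G * H))).coeff m ≠ 0 := by rwa [coeff_gradingPoly]
  have hm : (gradingPoly (dehomogenize K (G * H))).natTrailingDegree = m :=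
    le_antisymm (Polynomial.natTrailingDegree_le_of_ne_zero hψ)
      (Polynomial.le_natTrailingDegree (fun h0 => hψ (by rw [h0, Polynomial.coeff_zero]))
        fun j hj => by rw [coeff_gradingPoly, hlow j hj])
  rw [← hm, ← coeff_gradingPoly, ← Polynomial.trailingCoeff, map_mul, map_mul,
    Polynomial.trailingCoeff_mul, pow_two] at htan
  by_cases hG : X 1 ∣ (gradingPoly (dehomogenize K G)).trailingCoeff
  · exact Or.inr (isUnit_of_not_X_dvd_trailingCoeff hF hF0 hc hline hcone
      fun hH => htan (mul_dvd_mul hG hH))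
  · rw [mul_comm G H] at hF hF0 hline hcone
    exact Or.inl (isUnit_of_not_X_dvd_trailingCoeff hF hF0 hc hline hcone hG)

end IsAlgClosed

end PlaneCurve

theorem stmt17_general (E : Type*) [Field E] (k : ℕ) (hk : 2 ≤ k)
    (F : MvPolynomial (Fin 3) E) (hF : F.IsHomogeneous k)
    (f : MvPolynomial (Fin 2) E)
    (hf : f = aeval ![X 0, X 1, 1] F)
    (m : ℕ)
    (hmne : homogeneousComponent m f ≠ 0)
    (hlow : ∀ j < m, homogeneousComponent j f = 0)
    (hi : X 1 ∣ homogeneousComponent m f ∧ ¬ X 1 ^ 2 ∣ homogeneousComponent m f)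
    (hii : ∃ c : E, c ≠ 0 ∧
      aeval ![Polynomial.X, (0 : Polynomial E)] f = Polynomial.C c * Polynomial.X ^ k)
    (hiii : ∀ L : MvPolynomial (Fin 3) (AlgebraicClosure E), L ≠ 0 → L.IsHomogeneous 1 →
      eval ![0, 0, 1] L = 0 →
      ¬ L ∣ MvPolynomial.map (algebraMap E (AlgebraicClosure E)) F) :
    Irreducible (MvPolynomial.map (algebraMap E (AlgebraicClosure E)) F) := by
  obtain ⟨c, hc, hline⟩ := hii
  set φ := algebraMap E (AlgebraicClosure E)
  have hφ : Function.Injective φ := φ.injective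
  have hf' : PlaneCurve.dehomogenize _ (map φ F) = map φ f := hf ▸ PlaneCurve.dehomogenize_map φ F
  refine PlaneCurve.irreducible_of_simple_tangent (m := m) (c := φ c) (by omega) (hF.map φ)
    (fun j hj => ?_) ?_ ?_ ((map_ne_zero_iff _ hφ).2 hc) ?_ fun r hr => hiii _ ?_
    ((isHomogeneous_X _ 0).sub (isHomogeneous_C_mul_X r 1)) (by simp) hr
  · rw [hf', homogeneousComponent_map, hlow j hj, map_zero]
  · rwa [hf', homogeneousComponent_map, map_ne_zero_iff _ (map_injective _ hφ)]
  · rw [hf', homogeneousComponent_map, X_pow_dvd_map_iff hφ]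
    exact hi.2
  · rw [hf', PlaneCurve.aeval_X_zero_map, hline, Polynomial.map_mul, Polynomial.map_C,
      Polynomial.map_pow, Polynomial.map_X]
  · intro h0
    simpa using congrArg (eval ![1, 0, 0]) h0

/-- Segre–Barlotti irreducibility criterion: let `F` be homogeneous of degree
`k ≥ 2` over a field `E`, let `f(X,Y) = F(X,Y,1)` be its dehomogenization at `P = ⟨(0,0,1)⟩`
and `m ≥ 1` the multiplicity of `P` on the curve `Z(F)`.  If
(i) the line `Y = 0` counts once among the tangents at `P` (`Y ∣ f_m`, `Y² ∤ f_m`),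
(ii) the intersection multiplicity of `Z(F)` with `Y = 0` at `P` is `k`
    (`f(T,0) = c·T^k`, `c ≠ 0`), and
(iii) `Z(F)` has no linear component through `P`,
then `F` is absolutely irreducible. -/
theorem stmt17 (E : Type*) [Field E] (k : ℕ) (hk : 2 ≤ k)
    (F : MvPolynomial (Fin 3) E) (hF : F.IsHomogeneous k)
    (f : MvPolynomial (Fin 2) E)
    (hf : f = aeval ![X 0, X 1, 1] F)
    (m : ℕ) (hm : 1 ≤ m)
    (hmne : homogeneousComponent m f ≠ 0)
    (hlow : ∀ j < m, homogeneousComponent j f = 0)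
    (hi : X 1 ∣ homogeneousComponent m f ∧ ¬ X 1 ^ 2 ∣ homogeneousComponent m f)
    (hii : ∃ c : E, c ≠ 0 ∧
      aeval ![Polynomial.X, (0 : Polynomial E)] f = Polynomial.C c * Polynomial.X ^ k)
    (hiii : ∀ L : MvPolynomial (Fin 3) (AlgebraicClosure E), L ≠ 0 → L.IsHomogeneous 1 →
      eval ![0, 0, 1] L = 0 →
      ¬ L ∣ MvPolynomial.map (algebraMap E (AlgebraicClosure E)) F) :
    Irreducible (MvPolynomial.map (algebraMap E (AlgebraicClosure E)) F) :=
  stmt17_general E k hk F hF f hf m hmne hlow hi hii hiii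
end
end
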